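/- Let a, b, c be positive integers with a ≥ b. In ℚ(x₁,x₂,x₃), define Y = (x₁^c x₂^{a−b} + x₂^a + x₃^c)/(x₁x₃) and z₁ = (x₂^a + x₃^c)/x₁. Then Y·z₁^{c−1}·x₃ = z₁^c + (x₂^a + x₃^c)^{c−1} x₂^{a−b}; hence Y ∈ ℤ[z₁^{±1}, x₂^{±1}, x₃^{±1}]. -/

import Mathlib

/-!
Multiplying out, `Y x₃ = x₁^(c-1) x₂^(a-b) + z₁`, and `x₁^(c-1) z₁^(c-1) = (x₂^a + x₃^c)^(c-1)`,
which gives the identity. Since `z₁` and `x₃` are nonzero, it exhibits `Y` as a polynomial in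
`z₁, x₂, x₃` times `z₁^-(c-1) x₃⁻¹`.
-/

open MvPolynomial

theorem div_mul_div_pow_pred_mul_eq {F : Type*} [Field F] {x₁ x₃ s m : F} (h₁ : x₁ ≠ 0)
    (h₃ : x₃ ≠ 0) {c : ℕ} (hc : 0 < c) :
    (x₁ ^ c * m + s) / (x₁ * x₃) * (s / x₁) ^ (c - 1) * x₃ = (s / x₁) ^ c + s ^ (c - 1) * m := by
  obtain ⟨n, rfl⟩ := Nat.exists_eq_add_one_of_ne_zero hc.ne'
  rw [Nat.add_sub_cancel, div_pow, div_pow]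
  field_simp
  ring

theorem Subring.mem_of_mul_mul_eq {F : Type*} [Field F] {R : Subring F} {y u v w : F}
    (hu : u ≠ 0) (hv : v ≠ 0) (hu' : u⁻¹ ∈ R) (hv' : v⁻¹ ∈ R) (hw : w ∈ R)
    (h : y * u * v = w) : y ∈ R := by
  have hy : y = w * u⁻¹ * v⁻¹ := by
    rw [← h]
    field_simp
  exact hy ▸ R.mul_mem (R.mul_mem hw hu') hv'

theorem MvPolynomial.X_pow_add_X_pow_ne_zero {σ R : Type*} [CommSemiring R] [CharZero R]
    (i j : σ) (a c : ℕ) : (X i ^ a + X j ^ c : MvPolynomial σ R) ≠ 0 := by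
  intro h
  have h1 := congrArg (eval 1) h
  norm_num at h1

theorem stmt_15_general (a b c : ℕ) (hc : 0 < c) :
    let K := FractionRing (MvPolynomial (Fin 3) ℤ)
    let x₁ : K := algebraMap (MvPolynomial (Fin 3) ℤ) K (X 0)
    let x₂ : K := algebraMap (MvPolynomial (Fin 3) ℤ) K (X 1)
    let x₃ : K := algebraMap (MvPolynomial (Fin 3) ℤ) K (X 2)
    let Y : K := (x₁ ^ c * x₂ ^ (a - b) + x₂ ^ a + x₃ ^ c) / (x₁ * x₃)
    let z₁ : K := (x₂ ^ a + x₃ ^ c) / x₁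
    Y * z₁ ^ (c - 1) * x₃ = z₁ ^ c + (x₂ ^ a + x₃ ^ c) ^ (c - 1) * x₂ ^ (a - b) ∧
    Y ∈ Subring.closure ({z₁, x₂, x₃, z₁⁻¹, x₂⁻¹, x₃⁻¹} : Set K) := by
  intro K x₁ x₂ x₃ Y z₁
  have hinj : Function.Injective (algebraMap (MvPolynomial (Fin 3) ℤ) K) :=
    IsFractionRing.injective _ _
  have hx₁ : x₁ ≠ 0 := (map_ne_zero_iff _ hinj).2 (X_ne_zero 0)
  have hx₃ : x₃ ≠ 0 := (map_ne_zero_iff _ hinj).2 (X_ne_zero 2)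
  have hS : x₂ ^ a + x₃ ^ c ≠ 0 := by
    simpa [x₂, x₃] using (map_ne_zero_iff _ hinj).2 (X_pow_add_X_pow_ne_zero 1 2 a c)
  have key : Y * z₁ ^ (c - 1) * x₃ = z₁ ^ c + (x₂ ^ a + x₃ ^ c) ^ (c - 1) * x₂ ^ (a - b) := by
    simp only [Y, z₁, add_assoc]
    exact div_mul_div_pow_pred_mul_eq hx₁ hx₃ hc
  set R := Subring.closure ({z₁, x₂, x₃, z₁⁻¹, x₂⁻¹, x₃⁻¹} : Set K)
  have gen : ∀ u ∈ ({z₁, x₂, x₃, z₁⁻¹, x₂⁻¹, x₃⁻¹} : Set K), u ∈ R :=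
    fun _ hu => Subring.subset_closure hu
  have mz₁ : z₁ ∈ R := gen _ (by simp)
  have mx₂ : x₂ ∈ R := gen _ (by simp)
  have mx₃ : x₃ ∈ R := gen _ (by simp)
  have mz₁_inv : (z₁ ^ (c - 1))⁻¹ ∈ R := inv_pow z₁ (c - 1) ▸ pow_mem (gen _ (by simp)) _
  have mx₃_inv : x₃⁻¹ ∈ R := gen _ (by simp)
  have mrhs : z₁ ^ c + (x₂ ^ a + x₃ ^ c) ^ (c - 1) * x₂ ^ (a - b) ∈ R :=
    add_mem (pow_mem mz₁ _)
      (mul_mem (pow_mem (add_mem (pow_mem mx₂ _) (pow_mem mx₃ _)) _) (pow_mem mx₂ _))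
  exact ⟨key, Subring.mem_of_mul_mul_eq (pow_ne_zero _ (div_ne_zero hS hx₁)) hx₃
    mz₁_inv mx₃_inv mrhs key⟩

/-- Y·z₁^{c−1}·x₃ = z₁^c + (x₂^a + x₃^c)^{c−1} x₂^{a−b}, and hence Y lies in
ℤ[z₁^{±1}, x₂^{±1}, x₃^{±1}]. -/
theorem stmt_15 (a b c : ℕ) (ha : 0 < a) (hb : 0 < b) (hc : 0 < c) (hba : b ≤ a) :
    let K := FractionRing (MvPolynomial (Fin 3) ℤ)
    let x₁ : K := algebraMap (MvPolynomial (Fin 3) ℤ) K (X 0)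
    let x₂ : K := algebraMap (MvPolynomial (Fin 3) ℤ) K (X 1)
    let x₃ : K := algebraMap (MvPolynomial (Fin 3) ℤ) K (X 2)
    let Y : K := (x₁ ^ c * x₂ ^ (a - b) + x₂ ^ a + x₃ ^ c) / (x₁ * x₃)
    let z₁ : K := (x₂ ^ a + x₃ ^ c) / x₁
    Y * z₁ ^ (c - 1) * x₃ = z₁ ^ c + (x₂ ^ a + x₃ ^ c) ^ (c - 1) * x₂ ^ (a - b) ∧
    Y ∈ Subring.closure ({z₁, x₂, x₃, z₁⁻¹, x₂⁻¹, x₃⁻¹} : Set K) :=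
  stmt_15_general a b c hc
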